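/- arXiv:1906.10171 — 10 statements merged into one kernel-verified Lean document; each statement's English description precedes it below -/
import Mathlib

section
/- For all real parameters a, b, c, the quartic curve f(x,y) = (y + c x^2)^2 + x^2 (x-a)(x-b) = 0 is an invariant algebraic curve of Yablonskii's system ẋ = -4abcx - (a+b)y + 3(a+b)c x^2 + 4xy, ẏ = (a+b)ab x - 4abc y + (4abc^2 - (3/2)(a+b)^2 + 4ab) x^2 + 8(a+b)c xy + 8y^2, i.e. there exists a polynomial cofactor k(x,y) of degree at most 1 with p·∂f/∂x + q·∂f/∂y = k·f. -/
/-- The quartic `(y + c x²)² + x²(x-a)(x-b) = 0` is an invariant algebraic curve of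
Yablonskii's system, with a polynomial cofactor of degree at most 1. -/
theorem yablonskii_curve_invariant (a b c : ℝ) :
    ∃ k0 k1 k2 : ℝ, ∀ x y : ℝ,
      (-4 * a * b * c * x - (a + b) * y + 3 * (a + b) * c * x ^ 2 + 4 * x * y) *
          deriv (fun t : ℝ => (y + c * t ^ 2) ^ 2 + t ^ 2 * (t - a) * (t - b)) x +
        ((a + b) * a * b * x - 4 * a * b * c * y +
            (4 * a * b * c ^ 2 - (3 / 2) * (a + b) ^ 2 + 4 * a * b) * x ^ 2 +
            8 * (a + b) * c * x * y + 8 * y ^ 2) *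
          deriv (fun t : ℝ => (t + c * x ^ 2) ^ 2 + x ^ 2 * (x - a) * (x - b)) y =
      (k0 + k1 * x + k2 * y) * ((y + c * x ^ 2) ^ 2 + x ^ 2 * (x - a) * (x - b)) := by
  refine ⟨-8 * a * b * c, 12 * (a + b) * c, 16, fun x y => ?_⟩
  have h1 : HasDerivAt (fun t : ℝ => (y + c * t ^ 2) ^ 2 + t ^ 2 * (t - a) * (t - b))
      (2 * (y + c * x ^ 2) ^ 1 * (c * (2 * x ^ 1)) +
        ((2 * x ^ 1 * (x - a) + x ^ 2 * 1) * (x - b) + x ^ 2 * (x - a) * 1)) x := by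
    exact ((((hasDerivAt_pow 2 x).const_mul c).const_add y).pow 2).add
      ((((hasDerivAt_pow 2 x).mul ((hasDerivAt_id x).sub_const a)).mul
        ((hasDerivAt_id x).sub_const b)))
  have h2 : HasDerivAt (fun t : ℝ => (t + c * x ^ 2) ^ 2 + x ^ 2 * (x - a) * (x - b))
      (2 * (y + c * x ^ 2) ^ 1 * 1) y := by
    exact (((hasDerivAt_id y).add_const (c * x ^ 2)).pow 2).add_const _
  rw [h1.deriv, h2.deriv]
  ring
end

section
/- For every real parameter a, the quartic f(x,y) = 3(1+a)(a x^2 + y)^2 + 2y^2(2y - 3(1+a)x) is an invariant algebraic curve of Filipstov's system ẋ = 6(1+a)x + 2y - 6(2+a)x^2 + 12xy, ẏ = 15(1+a)y + 3a(1+a)x^2 - 2(9+5a)xy + 16y^2; i.e. there is a polynomial cofactor k of degree ≤ 1 with p·f_x + q·f_y = k·f. -/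
/-- The quartic `3(1+a)(ax²+y)² + 2y²(2y - 3(1+a)x) = 0` is an invariant algebraic curve of
Filipstov's system, with a polynomial cofactor of degree at most 1. -/
theorem filipstov_curve_invariant (a : ℝ) :
    ∃ k0 k1 k2 : ℝ, ∀ x y : ℝ,
      (6 * (1 + a) * x + 2 * y - 6 * (2 + a) * x ^ 2 + 12 * x * y) *
          deriv (fun t : ℝ =>
            3 * (1 + a) * (a * t ^ 2 + y) ^ 2 + 2 * y ^ 2 * (2 * y - 3 * (1 + a) * t)) x +
        (15 * (1 + a) * y + 3 * a * (1 + a) * x ^ 2 - 2 * (9 + 5 * a) * x * y + 16 * y ^ 2) *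
          deriv (fun t : ℝ =>
            3 * (1 + a) * (a * x ^ 2 + t) ^ 2 + 2 * t ^ 2 * (2 * t - 3 * (1 + a) * x)) y =
      (k0 + k1 * x + k2 * y) *
        (3 * (1 + a) * (a * x ^ 2 + y) ^ 2 + 2 * y ^ 2 * (2 * y - 3 * (1 + a) * x)) := by
  refine ⟨30 * (1 + a), -24 * (2 + a), 48, fun x y => ?_⟩
  have h1 : deriv (fun t : ℝ =>
      3 * (1 + a) * (a * t ^ 2 + y) ^ 2 + 2 * y ^ 2 * (2 * y - 3 * (1 + a) * t)) x =
      3 * (1 + a) * (2 * (a * x ^ 2 + y) * (a * (2 * x))) + 2 * y ^ 2 * (-(3 * (1 + a))) := by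
    have : HasDerivAt (fun t : ℝ =>
        3 * (1 + a) * (a * t ^ 2 + y) ^ 2 + 2 * y ^ 2 * (2 * y - 3 * (1 + a) * t))
        (3 * (1 + a) * (2 * (a * x ^ 2 + y) * (a * (2 * x))) + 2 * y ^ 2 * (-(3 * (1 + a)))) x := by
      have hb : HasDerivAt (fun t : ℝ => a * t ^ 2 + y) (a * (2 * x)) x := by
        simpa using (((hasDerivAt_pow 2 x).const_mul a).add_const y)
      have h2 : HasDerivAt (fun t : ℝ => 3 * (1 + a) * (a * t ^ 2 + y) ^ 2)
          (3 * (1 + a) * (2 * (a * x ^ 2 + y) * (a * (2 * x)))) x := by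
        simpa [pow_one] using ((hb.pow 2).const_mul (3 * (1 + a)))
      have h3 : HasDerivAt (fun t : ℝ => 2 * y ^ 2 * (2 * y - 3 * (1 + a) * t))
          (2 * y ^ 2 * (-(3 * (1 + a)))) x := by
        simpa using (((hasDerivAt_id x).const_mul (3 * (1 + a))).const_sub (2 * y)).const_mul
          (2 * y ^ 2)
      exact h2.add h3
    exact this.deriv
  have h2 : deriv (fun t : ℝ =>
      3 * (1 + a) * (a * x ^ 2 + t) ^ 2 + 2 * t ^ 2 * (2 * t - 3 * (1 + a) * x)) y =
      3 * (1 + a) * (2 * (a * x ^ 2 + y)) +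
        (2 * (2 * y) * (2 * y - 3 * (1 + a) * x) + 2 * y ^ 2 * 2) := by
    have : HasDerivAt (fun t : ℝ =>
        3 * (1 + a) * (a * x ^ 2 + t) ^ 2 + 2 * t ^ 2 * (2 * t - 3 * (1 + a) * x))
        (3 * (1 + a) * (2 * (a * x ^ 2 + y)) +
          (2 * (2 * y) * (2 * y - 3 * (1 + a) * x) + 2 * y ^ 2 * 2)) y := by
      have hb : HasDerivAt (fun t : ℝ => a * x ^ 2 + t) 1 y := (hasDerivAt_id y).const_add _
      have ha : HasDerivAt (fun t : ℝ => 3 * (1 + a) * (a * x ^ 2 + t) ^ 2)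
          (3 * (1 + a) * (2 * (a * x ^ 2 + y))) y := by
        simpa [pow_one] using ((hb.pow 2).const_mul (3 * (1 + a)))
      have hc : HasDerivAt (fun t : ℝ => 2 * t ^ 2) (2 * (2 * y)) y := by
        simpa using ((hasDerivAt_pow 2 y).const_mul 2)
      have hd : HasDerivAt (fun t : ℝ => 2 * t - 3 * (1 + a) * x) 2 y := by
        simpa using (((hasDerivAt_id y).const_mul 2).sub_const (3 * (1 + a) * x))
      exact ha.add (hc.mul hd)
    exact this.deriv
  rw [h1, h2]; ring
end

section
/- For every real parameter a, the quartic f(x,y) = x^2 + x^3 + x^2 y + 2a x y^2 + 2a x y^3 + a^2 y^4 is an invariant algebraic curve of Chavarriga's system ẋ = 5x + 6x^2 + 4(1+a)xy + a y^2, ẏ = x + 2y + 4xy + (2+3a)y^2; i.e. there exists a polynomial cofactor k of degree at most 1 with p·f_x + q·f_y = k·f. -/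
theorem hasDerivAt_chavarriga_quartic_fst (a y x : ℝ) :
    HasDerivAt (fun t : ℝ =>
        t ^ 2 + t ^ 3 + t ^ 2 * y + 2 * a * t * y ^ 2 + 2 * a * t * y ^ 3 + a ^ 2 * y ^ 4)
      (2 * x + 3 * x ^ 2 + 2 * x * y + 2 * a * y ^ 2 + 2 * a * y ^ 3) x := by
  have hlin := (hasDerivAt_id' x).const_mul (2 * a)
  exact HasDerivAt.congr_deriv (((((hasDerivAt_pow 2 x).fun_add (hasDerivAt_pow 3 x)).fun_add
    ((hasDerivAt_pow 2 x).mul_const y)).fun_add (hlin.mul_const (y ^ 2))).fun_add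
    (hlin.mul_const (y ^ 3)) |>.add_const (a ^ 2 * y ^ 4)) (by ring)

theorem hasDerivAt_chavarriga_quartic_snd (a x y : ℝ) :
    HasDerivAt (fun t : ℝ =>
        x ^ 2 + x ^ 3 + x ^ 2 * t + 2 * a * x * t ^ 2 + 2 * a * x * t ^ 3 + a ^ 2 * t ^ 4)
      (x ^ 2 + 4 * a * x * y + 6 * a * x * y ^ 2 + 4 * a ^ 2 * y ^ 3) y :=
  HasDerivAt.congr_deriv
    (((((hasDerivAt_id' y).const_mul (x ^ 2)).const_add (x ^ 2 + x ^ 3)).fun_add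
      ((hasDerivAt_pow 2 y).const_mul (2 * a * x))).fun_add
      ((hasDerivAt_pow 3 y).const_mul (2 * a * x)) |>.fun_add
      ((hasDerivAt_pow 4 y).const_mul (a ^ 2))) (by ring)

theorem chavarriga_cofactor_identity (a x y : ℝ) :
    (5 * x + 6 * x ^ 2 + 4 * (1 + a) * x * y + a * y ^ 2) *
        (2 * x + 3 * x ^ 2 + 2 * x * y + 2 * a * y ^ 2 + 2 * a * y ^ 3) +
      (x + 2 * y + 4 * x * y + (2 + 3 * a) * y ^ 2) *
        (x ^ 2 + 4 * a * x * y + 6 * a * x * y ^ 2 + 4 * a ^ 2 * y ^ 3) =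
    (10 + 18 * x + (10 + 12 * a) * y) *
      (x ^ 2 + x ^ 3 + x ^ 2 * y + 2 * a * x * y ^ 2 + 2 * a * x * y ^ 3 + a ^ 2 * y ^ 4) := by
  ring

/-- The quartic `x² + x³ + x²y + 2axy² + 2axy³ + a²y⁴ = 0` is an invariant algebraic curve of
Chavarriga's system, with a polynomial cofactor of degree at most 1. -/
theorem chavarriga_curve_invariant (a : ℝ) :
    ∃ k0 k1 k2 : ℝ, ∀ x y : ℝ,
      (5 * x + 6 * x ^ 2 + 4 * (1 + a) * x * y + a * y ^ 2) *
          deriv (fun t : ℝ =>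
            t ^ 2 + t ^ 3 + t ^ 2 * y + 2 * a * t * y ^ 2 + 2 * a * t * y ^ 3 + a ^ 2 * y ^ 4) x +
        (x + 2 * y + 4 * x * y + (2 + 3 * a) * y ^ 2) *
          deriv (fun t : ℝ =>
            x ^ 2 + x ^ 3 + x ^ 2 * t + 2 * a * x * t ^ 2 + 2 * a * x * t ^ 3 + a ^ 2 * t ^ 4) y =
      (k0 + k1 * x + k2 * y) *
        (x ^ 2 + x ^ 3 + x ^ 2 * y + 2 * a * x * y ^ 2 + 2 * a * x * y ^ 3 + a ^ 2 * y ^ 4) := by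
  refine ⟨10, 18, 10 + 12 * a, fun x y => ?_⟩
  rw [(hasDerivAt_chavarriga_quartic_fst a y x).deriv,
    (hasDerivAt_chavarriga_quartic_snd a x y).deriv]
  exact chavarriga_cofactor_identity a x y
end

section
/- For every real parameter a, the quartic f(x,y) = 1/4 + x - x^2 + a x^3 + xy + x^2 y^2 is an invariant algebraic curve of the system ẋ = 2(1 + 2x - 2a x^2 + 6xy), ẏ = 8 - 3a - 14a x - 2a xy - 8y^2; i.e. there exists a polynomial cofactor k of degree at most 1 with p·f_x + q·f_y = k·f. -/
theorem deriv_cls_quartic_fst (a x y : ℝ) :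
    deriv (fun t : ℝ => 1 / 4 + t - t ^ 2 + a * t ^ 3 + t * y + t ^ 2 * y ^ 2) x =
      1 - 2 * x + 3 * a * x ^ 2 + y + 2 * x * y ^ 2 := by
  have h := (((((hasDerivAt_id x).const_add (1 / 4)).sub (hasDerivAt_pow 2 x)).add
    ((hasDerivAt_pow 3 x).const_mul a)).add ((hasDerivAt_id x).mul_const y)).add
    ((hasDerivAt_pow 2 x).mul_const (y ^ 2))
  exact (h.congr_deriv (by norm_num; ring)).deriv

theorem deriv_cls_quartic_snd (a x y : ℝ) :
    deriv (fun t : ℝ => 1 / 4 + x - x ^ 2 + a * x ^ 3 + x * t + x ^ 2 * t ^ 2) y =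
      x + 2 * x ^ 2 * y := by
  have h := (((hasDerivAt_id y).const_mul x).const_add (1 / 4 + x - x ^ 2 + a * x ^ 3)).add
    ((hasDerivAt_pow 2 y).const_mul (x ^ 2))
  exact (h.congr_deriv (by norm_num; ring)).deriv

/-- The quartic `1/4 + x - x² + ax³ + xy + x²y² = 0` is an invariant algebraic curve of the
Chavarriga–Llibre–Sorolla (CLS) system, with a polynomial cofactor of degree at most 1. -/
theorem cls_curve_invariant (a : ℝ) :
    ∃ k0 k1 k2 : ℝ, ∀ x y : ℝ,
      (2 * (1 + 2 * x - 2 * a * x ^ 2 + 6 * x * y)) *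
          deriv (fun t : ℝ =>
            1 / 4 + t - t ^ 2 + a * t ^ 3 + t * y + t ^ 2 * y ^ 2) x +
        (8 - 3 * a - 14 * a * x - 2 * a * x * y - 8 * y ^ 2) *
          deriv (fun t : ℝ =>
            1 / 4 + x - x ^ 2 + a * x ^ 3 + x * t + x ^ 2 * t ^ 2) y =
      (k0 + k1 * x + k2 * y) *
        (1 / 4 + x - x ^ 2 + a * x ^ 3 + x * y + x ^ 2 * y ^ 2) := by
  -- `k1`, `k2` are forced by the degree-five terms, `k0` by the value at the origin.
  refine ⟨8, -12 * a, 8, fun x y => ?_⟩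
  rw [deriv_cls_quartic_fst, deriv_cls_quartic_snd]
  ring
end

section
/- For every real α with α ≠ -4, the degree-5 polynomial f(x,y) = x^2 + (16-α^2)x^3 + (α-2)x^2 y - (2/(α+4))x y^2 - (1/4)(4-α)(α+12)x^2 y^2 + ((8-α)/(α+4))x y^3 + (1/(α+4)^2)y^4 + ((α+12)/(α+4))x y^4 - (6/(α+4)^2)y^5 is an invariant algebraic curve of the system ẋ = 28x + 2(16-α^2)(α+12)x^2 + 6(3α-4)xy - (12/(α+4))y^2, ẏ = 2(16-α^2)x + 8y + (16-α^2)(α+12)xy + 2(5α-12)y^2, with cofactor k(x,y) = 56 + 6(16-α^2)(α+12)x + 4(13α-24)y; that is, p·∂f/∂x + q·∂f/∂y = k·f. -/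
theorem hasDerivAt_quintic {𝕜 : Type*} [NontriviallyNormedField 𝕜]
    (c₀ c₁ c₂ c₃ c₄ c₅ x : 𝕜) :
    HasDerivAt (fun t => c₀ + c₁ * t + c₂ * t ^ 2 + c₃ * t ^ 3 + c₄ * t ^ 4 + c₅ * t ^ 5)
      (c₁ + 2 * c₂ * x + 3 * c₃ * x ^ 2 + 4 * c₄ * x ^ 3 + 5 * c₅ * x ^ 4) x := by
  have h := (((((hasDerivAt_const x c₀).add ((hasDerivAt_id x).const_mul c₁)).add
    ((hasDerivAt_pow 2 x).const_mul c₂)).add ((hasDerivAt_pow 3 x).const_mul c₃)).add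
    ((hasDerivAt_pow 4 x).const_mul c₄)).add ((hasDerivAt_pow 5 x).const_mul c₅)
  exact h.congr_deriv (by push_cast; ring)

namespace CLS5

variable (α : ℝ)

noncomputable section

def p (x y : ℝ) : ℝ :=
  28 * x + 2 * (16 - α ^ 2) * (α + 12) * x ^ 2 + 6 * (3 * α - 4) * x * y -
    (12 / (α + 4)) * y ^ 2

def q (x y : ℝ) : ℝ :=
  2 * (16 - α ^ 2) * x + 8 * y + (16 - α ^ 2) * (α + 12) * x * y + 2 * (5 * α - 12) * y ^ 2

def f (x y : ℝ) : ℝ :=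
  x ^ 2 + (16 - α ^ 2) * x ^ 3 + (α - 2) * x ^ 2 * y - (2 / (α + 4)) * x * y ^ 2 -
    (1 / 4) * (4 - α) * (α + 12) * x ^ 2 * y ^ 2 + ((8 - α) / (α + 4)) * x * y ^ 3 +
    (1 / (α + 4) ^ 2) * y ^ 4 + ((α + 12) / (α + 4)) * x * y ^ 4 - (6 / (α + 4) ^ 2) * y ^ 5

def k (x y : ℝ) : ℝ :=
  56 + 6 * (16 - α ^ 2) * (α + 12) * x + 4 * (13 * α - 24) * y

def fx (x y : ℝ) : ℝ :=
  -(2 / (α + 4)) * y ^ 2 + ((8 - α) / (α + 4)) * y ^ 3 + ((α + 12) / (α + 4)) * y ^ 4 +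
    2 * (1 + (α - 2) * y - (1 / 4) * (4 - α) * (α + 12) * y ^ 2) * x +
    3 * (16 - α ^ 2) * x ^ 2

def fy (x y : ℝ) : ℝ :=
  (α - 2) * x ^ 2 + 2 * (-(2 / (α + 4)) * x - (1 / 4) * (4 - α) * (α + 12) * x ^ 2) * y +
    3 * ((8 - α) / (α + 4)) * x * y ^ 2 +
    4 * (1 / (α + 4) ^ 2 + ((α + 12) / (α + 4)) * x) * y ^ 3 - 30 / (α + 4) ^ 2 * y ^ 4

end

theorem hasDerivAt_f_fst (x y : ℝ) : HasDerivAt (fun t => f α t y) (fx α x y) x := by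
  have h := hasDerivAt_quintic
    ((1 / (α + 4) ^ 2) * y ^ 4 - (6 / (α + 4) ^ 2) * y ^ 5)
    (-(2 / (α + 4)) * y ^ 2 + ((8 - α) / (α + 4)) * y ^ 3 + ((α + 12) / (α + 4)) * y ^ 4)
    (1 + (α - 2) * y - (1 / 4) * (4 - α) * (α + 12) * y ^ 2) (16 - α ^ 2) 0 0 x
  refine (h.congr_of_eventuallyEq (.of_forall fun t => ?_)).congr_deriv ?_
  · simp only [f]; ring
  · simp only [fx]; ring

theorem hasDerivAt_f_snd (x y : ℝ) : HasDerivAt (fun t => f α x t) (fy α x y) y := by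
  have h := hasDerivAt_quintic (x ^ 2 + (16 - α ^ 2) * x ^ 3) ((α - 2) * x ^ 2)
    (-(2 / (α + 4)) * x - (1 / 4) * (4 - α) * (α + 12) * x ^ 2) (((8 - α) / (α + 4)) * x)
    (1 / (α + 4) ^ 2 + ((α + 12) / (α + 4)) * x) (-(6 / (α + 4) ^ 2)) y
  refine (h.congr_of_eventuallyEq (.of_forall fun t => ?_)).congr_deriv ?_
  · simp only [f]; ring
  · simp only [fy]; ring

variable {α}

theorem cofactor_identity (hα : α + 4 ≠ 0) (x y : ℝ) :
    p α x y * fx α x y + q α x y * fy α x y = k α x y * f α x y := by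
  simp only [p, q, fx, fy, k, f]
  field_simp
  ring

end CLS5

open CLS5 in
/-- The degree-5 curve of the CLS5 system is invariant with the given cofactor
`k(x,y) = 56 + 6(16-α²)(α+12)x + 4(13α-24)y`, for every real `α ≠ -4`. -/
theorem cls5_curve_invariant (α : ℝ) (hα : α ≠ -4) :
    ∀ x y : ℝ,
      (28 * x + 2 * (16 - α ^ 2) * (α + 12) * x ^ 2 + 6 * (3 * α - 4) * x * y -
            (12 / (α + 4)) * y ^ 2) *
          deriv (fun t : ℝ =>
            t ^ 2 + (16 - α ^ 2) * t ^ 3 + (α - 2) * t ^ 2 * y - (2 / (α + 4)) * t * y ^ 2 -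
              (1 / 4) * (4 - α) * (α + 12) * t ^ 2 * y ^ 2 + ((8 - α) / (α + 4)) * t * y ^ 3 +
              (1 / (α + 4) ^ 2) * y ^ 4 + ((α + 12) / (α + 4)) * t * y ^ 4 -
              (6 / (α + 4) ^ 2) * y ^ 5) x +
        (2 * (16 - α ^ 2) * x + 8 * y + (16 - α ^ 2) * (α + 12) * x * y +
            2 * (5 * α - 12) * y ^ 2) *
          deriv (fun t : ℝ =>
            x ^ 2 + (16 - α ^ 2) * x ^ 3 + (α - 2) * x ^ 2 * t - (2 / (α + 4)) * x * t ^ 2 -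
              (1 / 4) * (4 - α) * (α + 12) * x ^ 2 * t ^ 2 + ((8 - α) / (α + 4)) * x * t ^ 3 +
              (1 / (α + 4) ^ 2) * t ^ 4 + ((α + 12) / (α + 4)) * x * t ^ 4 -
              (6 / (α + 4) ^ 2) * t ^ 5) y =
      (56 + 6 * (16 - α ^ 2) * (α + 12) * x + 4 * (13 * α - 24) * y) *
        (x ^ 2 + (16 - α ^ 2) * x ^ 3 + (α - 2) * x ^ 2 * y - (2 / (α + 4)) * x * y ^ 2 -
          (1 / 4) * (4 - α) * (α + 12) * x ^ 2 * y ^ 2 + ((8 - α) / (α + 4)) * x * y ^ 3 +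
          (1 / (α + 4) ^ 2) * y ^ 4 + ((α + 12) / (α + 4)) * x * y ^ 4 -
          (6 / (α + 4) ^ 2) * y ^ 5) := by
  intro x y
  show p α x y * deriv (fun t => f α t y) x + q α x y * deriv (fun t => f α x t) y =
    k α x y * f α x y
  rw [(hasDerivAt_f_fst α x y).deriv, (hasDerivAt_f_snd α x y).deriv]
  exact cofactor_identity (mt eq_neg_iff_add_eq_zero.mpr hα) x y
end

section
/- For every real γ ≠ 0, the degree-5 polynomial f(x,y) = γ y^2 - 4x^2 y + (γ/2)(γ-12)xy^2 - (γ^2/4)(γ-16)y^3 + (4/γ)x^4 - (γ-24)x^3 y + (γ/16)(γ^2-256)x^2 y^2 - (24/γ)x^5 + (γ+16)x^4 y is an invariant algebraic curve of the system ẋ = -8x + (γ/2)(γ-16)y - (5γ-64)x^2 + (γ/8)(γ^2-256)xy, ẏ = -28y + (24/γ)x^2 - 3(3γ-32)xy + (γ/4)(γ^2-256)y^2, with cofactor k(x,y) = -56 - 2(13γ-152)x + (3γ/4)(γ^2-256)y; that is, p·∂f/∂x + q·∂f/∂y = k·f identically. -/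
lemma dquin (a b c d e f x : ℝ) :
    deriv (fun t : ℝ => a + (b * t ^ 1 + c * t ^ 2 + d * t ^ 3 + e * t ^ 4 + f * t ^ 5)) x
      = b + 2 * c * x + 3 * d * x ^ 2 + 4 * e * x ^ 3 + 5 * f * x ^ 4 := by
  have H : HasDerivAt (fun t : ℝ => b * t ^ 1 + c * t ^ 2 + d * t ^ 3 + e * t ^ 4 + f * t ^ 5)
      (b * ((1:ℕ) * x ^ 0) + c * ((2:ℕ) * x ^ 1) + d * ((3:ℕ) * x ^ 2) + e * ((4:ℕ) * x ^ 3)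
        + f * ((5:ℕ) * x ^ 4)) x :=
    (((((hasDerivAt_pow 1 x).const_mul b).add ((hasDerivAt_pow 2 x).const_mul c)).add
      ((hasDerivAt_pow 3 x).const_mul d)).add ((hasDerivAt_pow 4 x).const_mul e)).add
      ((hasDerivAt_pow 5 x).const_mul f)
  rw [(H.const_add a).deriv]
  push_cast
  ring

/-- The degree-5 curve of the new AFL5 system is invariant with cofactor
`k(x,y) = -56 - 2(13γ-152)x + (3γ/4)(γ²-256)y`, for every real `γ ≠ 0`. -/
theorem afl5_curve_invariant (γ : ℝ) (hγ : γ ≠ 0) :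
    ∀ x y : ℝ,
      (-8 * x + (γ / 2) * (γ - 16) * y - (5 * γ - 64) * x ^ 2 +
            (γ / 8) * (γ ^ 2 - 256) * x * y) *
          deriv (fun t : ℝ =>
            γ * y ^ 2 - 4 * t ^ 2 * y + (γ / 2) * (γ - 12) * t * y ^ 2 -
              (γ ^ 2 / 4) * (γ - 16) * y ^ 3 + (4 / γ) * t ^ 4 - (γ - 24) * t ^ 3 * y +
              (γ / 16) * (γ ^ 2 - 256) * t ^ 2 * y ^ 2 - (24 / γ) * t ^ 5 +
              (γ + 16) * t ^ 4 * y) x +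
        (-28 * y + (24 / γ) * x ^ 2 - 3 * (3 * γ - 32) * x * y +
            (γ / 4) * (γ ^ 2 - 256) * y ^ 2) *
          deriv (fun t : ℝ =>
            γ * t ^ 2 - 4 * x ^ 2 * t + (γ / 2) * (γ - 12) * x * t ^ 2 -
              (γ ^ 2 / 4) * (γ - 16) * t ^ 3 + (4 / γ) * x ^ 4 - (γ - 24) * x ^ 3 * t +
              (γ / 16) * (γ ^ 2 - 256) * x ^ 2 * t ^ 2 - (24 / γ) * x ^ 5 +
              (γ + 16) * x ^ 4 * t) y =
      (-56 - 2 * (13 * γ - 152) * x + (3 * γ / 4) * (γ ^ 2 - 256) * y) *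
        (γ * y ^ 2 - 4 * x ^ 2 * y + (γ / 2) * (γ - 12) * x * y ^ 2 -
          (γ ^ 2 / 4) * (γ - 16) * y ^ 3 + (4 / γ) * x ^ 4 - (γ - 24) * x ^ 3 * y +
          (γ / 16) * (γ ^ 2 - 256) * x ^ 2 * y ^ 2 - (24 / γ) * x ^ 5 +
          (γ + 16) * x ^ 4 * y) := by
  intro x y
  rw [show (fun t : ℝ =>
        γ * y ^ 2 - 4 * t ^ 2 * y + (γ / 2) * (γ - 12) * t * y ^ 2 -
          (γ ^ 2 / 4) * (γ - 16) * y ^ 3 + (4 / γ) * t ^ 4 - (γ - 24) * t ^ 3 * y +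
          (γ / 16) * (γ ^ 2 - 256) * t ^ 2 * y ^ 2 - (24 / γ) * t ^ 5 +
          (γ + 16) * t ^ 4 * y)
      = (fun t : ℝ => (γ * y ^ 2 - (γ ^ 2 / 4) * (γ - 16) * y ^ 3) +
          (((γ / 2) * (γ - 12) * y ^ 2) * t ^ 1 +
           (-4 * y + (γ / 16) * (γ ^ 2 - 256) * y ^ 2) * t ^ 2 +
           (-(γ - 24) * y) * t ^ 3 +
           (4 / γ + (γ + 16) * y) * t ^ 4 +
           (-(24 / γ)) * t ^ 5)) from funext fun t => by ring,
    dquin,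
    show (fun t : ℝ =>
        γ * t ^ 2 - 4 * x ^ 2 * t + (γ / 2) * (γ - 12) * x * t ^ 2 -
          (γ ^ 2 / 4) * (γ - 16) * t ^ 3 + (4 / γ) * x ^ 4 - (γ - 24) * x ^ 3 * t +
          (γ / 16) * (γ ^ 2 - 256) * x ^ 2 * t ^ 2 - (24 / γ) * x ^ 5 +
          (γ + 16) * x ^ 4 * t)
      = (fun t : ℝ => ((4 / γ) * x ^ 4 - (24 / γ) * x ^ 5) +
          ((-4 * x ^ 2 - (γ - 24) * x ^ 3 + (γ + 16) * x ^ 4) * t ^ 1 +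
           (γ + (γ / 2) * (γ - 12) * x + (γ / 16) * (γ ^ 2 - 256) * x ^ 2) * t ^ 2 +
           (-((γ ^ 2 / 4) * (γ - 16))) * t ^ 3 +
           (0:ℝ) * t ^ 4 + (0:ℝ) * t ^ 5)) from funext fun t => by ring,
    dquin]
  field_simp
  ring
end

section
/- Let A, B, C be homogeneous polynomials of degree m+1 in X, Y, Z over ℂ satisfying the Euler condition X·A + Y·B + Z·C = 0. Then there exist homogeneous polynomials L, M, N of degree m such that A = M·Z - N·Y, B = N·X - L·Z, and C = L·Y - M·X. -/
open MvPolynomial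

noncomputable def killVar (i : Fin 3) :
    MvPolynomial (Fin 3) ℂ →ₐ[ℂ] MvPolynomial (Fin 3) ℂ :=
  aeval (fun j => if j = i then 0 else X j)

lemma killVar_X (i j : Fin 3) :
    killVar i (X j) = if j = i then 0 else X j := by
  simp [killVar]

lemma killVar_X_self (i : Fin 3) : killVar i (X i) = 0 := by simp [killVar_X]

lemma killVar_X_ne {i j : Fin 3} (h : j ≠ i) : killVar i (X j) = X j := by
  simp [killVar_X, h]

lemma dvd_sub_killVar (i : Fin 3) (p : MvPolynomial (Fin 3) ℂ) :
    X i ∣ p - killVar i p := by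
  induction p using MvPolynomial.induction_on with
  | C a => simp [killVar]
  | add p q hp hq =>
      have : p + q - killVar i (p + q) = (p - killVar i p) + (q - killVar i q) := by
        rw [map_add]; ring
      rw [this]; exact dvd_add hp hq
  | mul_X p j hp =>
      by_cases h : j = i
      · subst h
        rw [map_mul, killVar_X_self, mul_zero, sub_zero]
        exact Dvd.intro_left p rfl
      · rw [map_mul, killVar_X_ne h]
        have : p * X j - killVar i p * X j = (p - killVar i p) * X j := by ring
        rw [this]
        exact Dvd.dvd.mul_right hp _

lemma X_dvd_iff_killVar (i : Fin 3) (p : MvPolynomial (Fin 3) ℂ) :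
    X i ∣ p ↔ killVar i p = 0 := by
  constructor
  · rintro ⟨q, rfl⟩
    rw [map_mul, killVar_X_self, zero_mul]
  · intro h
    have := dvd_sub_killVar i p
    rwa [h, sub_zero] at this

lemma killVar_idem (i : Fin 3) (p : MvPolynomial (Fin 3) ℂ) :
    killVar i (killVar i p) = killVar i p := by
  have : (killVar i).comp (killVar i) = killVar i := by
    rw [killVar, comp_aeval]
    congr 1
    funext j
    by_cases h : j = i
    · simp [h]
    · simp [h, killVar_X_ne h]
  exact congrArg (fun f => f p) (congrArg (DFunLike.coe) this)

lemma hc_mul_X (n : ℕ) (i : Fin 3) (u : MvPolynomial (Fin 3) ℂ) :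
    homogeneousComponent (n + 1) (u * X i) = homogeneousComponent n u * X i := by
  conv_lhs => rw [← sum_homogeneousComponent u]
  rw [Finset.sum_mul, map_sum]
  have key : ∀ k, homogeneousComponent (n + 1) (homogeneousComponent k u * X i)
      = if n + 1 = k + 1 then homogeneousComponent k u * X i else 0 := by
    intro k
    apply homogeneousComponent_of_mem
    rw [mem_homogeneousSubmodule]
    exact (homogeneousComponent_isHomogeneous k u).mul (isHomogeneous_X ℂ i)
  simp_rw [key]
  simp_rw [Nat.add_right_cancel_iff]
  rw [Finset.sum_ite_eq (Finset.range (u.totalDegree + 1)) n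
    (fun k => homogeneousComponent k u * X i)]
  by_cases h : n ∈ Finset.range (u.totalDegree + 1)
  · rw [if_pos h]
  · rw [if_neg h]
    rw [homogeneousComponent_eq_zero _ _ (by simpa [Finset.mem_range, Nat.lt_succ_iff] using h), zero_mul]

lemma hc_of_homog {n : ℕ} {p : MvPolynomial (Fin 3) ℂ} (h : p.IsHomogeneous n) :
    homogeneousComponent n p = p := by
  rw [homogeneousComponent_of_mem (by rwa [mem_homogeneousSubmodule]), if_pos rfl]

/-- If `A, B, C` are homogeneous of degree `m+1` in `X, Y, Z` and satisfy the Euler condition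
`X·A + Y·B + Z·C = 0`, then there exist homogeneous polynomials `L, M, N` of degree `m` with
`A = MZ - NY`, `B = NX - LZ`, `C = LY - MX`. -/
theorem projective_one_form_LMN (m : ℕ) (A B C : MvPolynomial (Fin 3) ℂ)
    (hA : A.IsHomogeneous (m + 1)) (hB : B.IsHomogeneous (m + 1))
    (hC : C.IsHomogeneous (m + 1))
    (hEuler : X 0 * A + X 1 * B + X 2 * C = 0) :
    ∃ L M N : MvPolynomial (Fin 3) ℂ,
      L.IsHomogeneous m ∧ M.IsHomogeneous m ∧ N.IsHomogeneous m ∧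
      A = M * X 2 - N * X 1 ∧ B = N * X 0 - L * X 2 ∧ C = L * X 1 - M * X 0 := by
  classical
  have hE2 : X 0 * killVar 2 A + X 1 * killVar 2 B = 0 := by
    have h := congrArg (killVar 2) hEuler
    rw [map_add, map_add, map_mul, map_mul, map_mul, map_zero,
      killVar_X_self, killVar_X_ne (show (0:Fin 3) ≠ 2 by decide),
      killVar_X_ne (show (1:Fin 3) ≠ 2 by decide), zero_mul, add_zero] at h
    exact h
  have h1 : killVar 0 (killVar 2 B) = 0 := by
    have h := congrArg (killVar 0) hE2
    rw [map_add, map_mul, map_mul, killVar_X_self,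
      killVar_X_ne (show (1:Fin 3) ≠ 0 by decide), zero_mul, zero_add, map_zero] at h
    rcases mul_eq_zero.mp h with h' | h'
    · exact absurd h' (X_ne_zero 1)
    · exact h'
  obtain ⟨P, hP⟩ := (X_dvd_iff_killVar 0 (killVar 2 B)).mpr h1
  have hPP : killVar 2 P = P := by
    have h2 := congrArg (killVar 2) hP
    rw [killVar_idem, hP, map_mul,
      killVar_X_ne (show (0:Fin 3) ≠ 2 by decide)] at h2
    exact (mul_left_cancel₀ (X_ne_zero 0) h2).symm
  have hA2 : killVar 2 A + X 1 * P = 0 := by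
    have h3 : X 0 * (killVar 2 A + X 1 * P) = 0 := by linear_combination hE2 - X 1 * hP
    rcases mul_eq_zero.mp h3 with h' | h'
    · exact absurd h' (X_ne_zero 0)
    · exact h'
  obtain ⟨M, hM⟩ : X 2 ∣ A + X 1 * P := by
    rw [X_dvd_iff_killVar, map_add, map_mul,
      killVar_X_ne (show (1:Fin 3) ≠ 2 by decide), hPP]
    exact hA2
  obtain ⟨Q, hQ⟩ : X 2 ∣ B - X 0 * P := by
    rw [X_dvd_iff_killVar, map_sub, map_mul,
      killVar_X_ne (show (0:Fin 3) ≠ 2 by decide), hPP, hP, sub_self]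
  have hC2 : X 0 * M + X 1 * Q + C = 0 := by
    have h4 : X 2 * (X 0 * M + X 1 * Q + C) = 0 := by
      linear_combination hEuler - X 0 * hM - X 1 * hQ
    rcases mul_eq_zero.mp h4 with h' | h'
    · exact absurd h' (X_ne_zero 2)
    · exact h'
  have eA : A = M * X 2 - P * X 1 := by linear_combination hM
  have eB : B = P * X 0 - (-Q) * X 2 := by linear_combination hQ
  have eC : C = (-Q) * X 1 - M * X 0 := by linear_combination hC2
  refine ⟨homogeneousComponent m (-Q), homogeneousComponent m M, homogeneousComponent m P,
    homogeneousComponent_isHomogeneous m _, homogeneousComponent_isHomogeneous m _,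
    homogeneousComponent_isHomogeneous m _, ?_, ?_, ?_⟩
  · calc A = homogeneousComponent (m + 1) A := (hc_of_homog hA).symm
      _ = homogeneousComponent (m + 1) (M * X 2 - P * X 1) := by rw [← eA]
      _ = homogeneousComponent m M * X 2 - homogeneousComponent m P * X 1 := by
          rw [map_sub, hc_mul_X, hc_mul_X]
  · calc B = homogeneousComponent (m + 1) B := (hc_of_homog hB).symm
      _ = homogeneousComponent (m + 1) (P * X 0 - (-Q) * X 2) := by rw [← eB]
      _ = homogeneousComponent m P * X 0 - homogeneousComponent m (-Q) * X 2 := by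
          rw [map_sub, hc_mul_X, hc_mul_X]
  · calc C = homogeneousComponent (m + 1) C := (hc_of_homog hC).symm
      _ = homogeneousComponent (m + 1) ((-Q) * X 1 - M * X 0) := by rw [← eC]
      _ = homogeneousComponent m (-Q) * X 1 - homogeneousComponent m M * X 0 := by
          rw [map_sub, hc_mul_X, hc_mul_X]
end

section
/- Let ẋ = p(x,y), ẏ = q(x,y) be a quadratic system with p = a₁₀x + a₀₁y + a₂₀x² + a₁₁xy and q = b₁₀x + b₀₁y + b₂₀x² + b₁₁xy + 2a₁₁y², and suppose f(x,y) is a polynomial of degree n with p·f_x + q·f_y = k·f for a polynomial k of degree at most 1. Define the transformed system p̃(x,y) = x³p(1/x, y/x²), q̃(x,y) = 2x²y·p(1/x, y/x²) - x³q(1/x, y/x²), and let m be the value of the curve under the transformation, writing f̃(x,y) = x^{2n}·f(1/x, y/x²)·x^{-m} with m chosen maximal so that f̃ is a polynomial not divisible by x. Then there exists a polynomial k̃ of degree at most 1 such that p̃·∂f̃/∂x + q̃·∂f̃/∂y = k̃·f̃; i.e. the transformed curve is invariant for the transformed system. -/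
/-!
Write `g = x^m f̃`, so that `g(x, y) = x^{2n} f(1/x, y/x²)` off the line `x = 0`. The chain rule
along the Cremona map expresses `g_x, g_y` through `f_x, f_y` at `(1/x, y/x²)`, and the invariance
of `f` then gives `x (p̃ g_x + q̃ g_y) = (2n p̃ - x² k(1/x, y/x²)) g` on `x ≠ 0`, hence as
polynomials. Dividing out `x^m` turns this into `x (p̃ f̃_x + q̃ f̃_y) = L f̃` with `L` quadratic and
`L ≡ γ y (mod x)`; since `x` is prime and `x ∤ f̃`, `γ = 0`, and `L / x` is the new cofactor.
-/

open MvPolynomial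

namespace MvPolynomial

theorem hasDerivAt_eval_comp {𝕜 σ : Type*} [NontriviallyNormedField 𝕜] [Fintype σ]
    (p : MvPolynomial σ 𝕜) {c : 𝕜 → σ → 𝕜} {c' : σ → 𝕜} {t : 𝕜}
    (hc : ∀ i, HasDerivAt (fun s => c s i) (c' i) t) :
    HasDerivAt (fun s => eval (c s) p) (∑ i, eval (c t) (pderiv i p) * c' i) t := by
  classical
  induction p using MvPolynomial.induction_on with
  | C a => simpa using hasDerivAt_const t a
  | add p q hp hq =>
    simp only [map_add, add_mul, Finset.sum_add_distrib]
    exact hp.fun_add hq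
  | mul_X p i hp =>
    simp only [eval_mul, eval_X]
    refine (hp.fun_mul (hc i)).congr_deriv ?_
    simp only [pderiv_mul, pderiv_X, Pi.single_apply, map_add, eval_mul, eval_X, add_mul,
      Finset.sum_add_distrib, Finset.sum_mul, mul_ite, mul_one, mul_zero, map_zero, ite_mul,
      zero_mul, apply_ite (eval (c t)), Finset.sum_ite_eq, Finset.mem_univ, if_true,
      mul_right_comm]

theorem hasDerivAt_eval_vecCons {𝕜 : Type*} [NontriviallyNormedField 𝕜]
    (p : MvPolynomial (Fin 2) 𝕜) {c₁ c₂ : 𝕜 → 𝕜} {d₁ d₂ t : 𝕜}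
    (h₁ : HasDerivAt c₁ d₁ t) (h₂ : HasDerivAt c₂ d₂ t) :
    HasDerivAt (fun s => eval ![c₁ s, c₂ s] p)
      (eval ![c₁ t, c₂ t] (pderiv 0 p) * d₁ + eval ![c₁ t, c₂ t] (pderiv 1 p) * d₂) t := by
  simpa [Fin.sum_univ_two] using
    hasDerivAt_eval_comp p (c := fun s => ![c₁ s, c₂ s]) (c' := ![d₁, d₂])
      (Fin.forall_fin_two.2 ⟨by simpa using h₁, by simpa using h₂⟩)

theorem eq_of_eval_eq_of_ne_zero {R σ : Type*} [CommRing R] [IsDomain R] [Infinite R]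
    {A B : MvPolynomial σ R} (i : σ) (h : ∀ v : σ → R, v i ≠ 0 → eval v A = eval v B) :
    A = B := by
  rw [← X_mul_cancel_left_iff (i := i)]
  refine MvPolynomial.funext fun v => ?_
  by_cases hv : v i = 0
  · simp [hv]
  · simp [h v hv]

theorem totalDegree_le_one_iff {R σ : Type*} [CommSemiring R] [Fintype σ]
    {k : MvPolynomial σ R} :
    k.totalDegree ≤ 1 ↔ ∃ (c₀ : R) (c : σ → R), k = C c₀ + ∑ i, c i • X i := by
  constructor
  · intro hk
    have hlin : homogeneousComponent 1 k ∈ Submodule.span R (Set.range X) := by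
      rw [← homogeneousSubmodule_one_eq_span_X]
      exact homogeneousComponent_mem 1 k
    obtain ⟨c, hc⟩ := (Submodule.mem_span_range_iff_exists_fun R).mp hlin
    refine ⟨coeff 0 k, c, ?_⟩
    have hsum : ∑ d ∈ Finset.range 2, homogeneousComponent d k = k := by
      rw [← Finset.sum_subset (Finset.range_subset_range.mpr (Nat.succ_le_succ hk)),
        sum_homogeneousComponent]
      intro d hd hd'
      exact homogeneousComponent_eq_zero _ _ (by simp at hd hd'; omega)
    calc k = ∑ d ∈ Finset.range 2, homogeneousComponent d k := hsum.symm
      _ = _ := by rw [Finset.sum_range_succ, Finset.sum_range_one, homogeneousComponent_zero, hc]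
  · rintro ⟨c₀, c, rfl⟩
    refine (totalDegree_add _ _).trans (max_le (by simp) ?_)
    refine (totalDegree_finsetSum _ _).trans (Finset.sup_le fun i _ => ?_)
    exact (totalDegree_smul_le _ _).trans (isHomogeneous_X R i).totalDegree_le

end MvPolynomial

section VectorField

variable {R : Type*} [CommRing R]

noncomputable def quadP (a10 a01 a20 a11 : R) : MvPolynomial (Fin 2) R :=
  C a10 * X 0 + C a01 * X 1 + C a20 * X 0 ^ 2 + C a11 * X 0 * X 1

noncomputable def quadQ (a11 b10 b01 b20 b11 : R) : MvPolynomial (Fin 2) R :=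
  C b10 * X 0 + C b01 * X 1 + C b20 * X 0 ^ 2 + C b11 * X 0 * X 1 + C (2 * a11) * X 1 ^ 2

noncomputable def cremonaP (a10 a01 a20 a11 : R) : MvPolynomial (Fin 2) R :=
  C a20 * X 0 + C a11 * X 1 + C a10 * X 0 ^ 2 + C a01 * X 0 * X 1

noncomputable def cremonaQ (a10 a01 a20 b10 b01 b20 b11 : R) : MvPolynomial (Fin 2) R :=
  C (-b20) * X 0 + C (2 * a20 - b11) * X 1 + C (-b10) * X 0 ^ 2 +
    C (2 * a10 - b01) * X 0 * X 1 + C (2 * a01) * X 1 ^ 2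

theorem X_zero_mul_invariance_of_X_pow_mul {P Q L h : MvPolynomial (Fin 2) R} (m : ℕ)
    (H : X 0 * (P * pderiv 0 (X 0 ^ m * h) + Q * pderiv 1 (X 0 ^ m * h)) = L * (X 0 ^ m * h)) :
    X 0 * (P * pderiv 0 h + Q * pderiv 1 h) = (L - C (m : R) * P) * h := by
  have hpow : X 0 * pderiv 0 (X 0 ^ m : MvPolynomial (Fin 2) R) = C (m : R) * X 0 ^ m := by
    rw [X_pow_eq_monomial, X_mul_pderiv_monomial]
    simp [nsmul_eq_mul]
  have hx : X 0 * pderiv 0 (X 0 ^ m * h) = X 0 ^ m * (C (m : R) * h + X 0 * pderiv 0 h) := by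
    rw [pderiv_mul]
    linear_combination h * hpow
  have hy : pderiv 1 (X 0 ^ m * h) = X 0 ^ m * pderiv 1 h := by
    simp
  apply (isRegular_X_pow (n := 0) m).left
  linear_combination H - P * hx - X 0 * Q * hy

theorem eq_mul_of_X_zero_mul_eq [IsDomain R] {A h W : MvPolynomial (Fin 2) R} {γ : R}
    (H : X 0 * A = (X 0 * W + C γ * X 1) * h) (hh : ¬ X 0 ∣ h) : A = W * h := by
  have hdvd : X 0 ∣ h * (C γ * X 1) := ⟨A - W * h, by linear_combination -H⟩
  have hγ : γ = 0 := by
    rcases X_prime.dvd_or_dvd hdvd with h0 | h0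
    · exact absurd h0 hh
    rcases X_prime.dvd_or_dvd h0 with ⟨r, hr⟩ | h01
    · simpa using congrArg constantCoeff hr
    · exact absurd (X_dvd_X.mp h01) (by decide)
  rw [hγ, map_zero, zero_mul, add_zero, mul_assoc] at H
  exact (isRegular_X (n := (0 : Fin 2))).left H

end VectorField

section Pullback

variable {K : Type*} [Field K]

def IsCremonaPullback (N : ℕ) (f g : MvPolynomial (Fin 2) K) : Prop :=
  ∀ x y : K, x ≠ 0 → eval ![x, y] g = x ^ N * eval ![1 / x, y / x ^ 2] f

theorem isCremonaPullback_quadP (a10 a01 a20 a11 : K) :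
    IsCremonaPullback 3 (quadP a10 a01 a20 a11) (cremonaP a10 a01 a20 a11) := by
  intro x y hx
  simp only [quadP, cremonaP, eval_add, eval_mul, eval_C, eval_X, eval_pow,
    Matrix.cons_val_zero, Matrix.cons_val_one]
  field_simp
  ring

theorem eval_cremonaQ (a10 a01 a20 a11 b10 b01 b20 b11 : K) {x : K} (y : K) (hx : x ≠ 0) :
    eval ![x, y] (cremonaQ a10 a01 a20 b10 b01 b20 b11) =
      2 * x ^ 2 * y * eval ![1 / x, y / x ^ 2] (quadP a10 a01 a20 a11) -
        x ^ 3 * eval ![1 / x, y / x ^ 2] (quadQ a11 b10 b01 b20 b11) := by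
  simp only [quadP, quadQ, cremonaQ, eval_add, eval_mul, eval_C, eval_X, eval_pow,
    Matrix.cons_val_zero, Matrix.cons_val_one]
  field_simp
  ring

theorem isCremonaPullback_linear (c₀ : K) (c : Fin 2 → K) :
    IsCremonaPullback 2 (C c₀ + ∑ i, c i • X i)
      (C c₀ * X 0 ^ 2 + C (c 0) * X 0 + C (c 1) * X 1) := by
  intro x y hx
  simp only [Fin.sum_univ_two, smul_eq_C_mul, eval_add, eval_mul, eval_C, eval_X, eval_pow,
    Matrix.cons_val_zero, Matrix.cons_val_one]
  field_simp
  ring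

end Pullback

namespace IsCremonaPullback

variable {𝕜 : Type*} [NontriviallyNormedField 𝕜] {N : ℕ} {f g : MvPolynomial (Fin 2) 𝕜} {x : 𝕜}

theorem eval_pderiv_zero (hg : IsCremonaPullback N f g) (y : 𝕜) (hx : x ≠ 0) :
    x ^ 3 * eval ![x, y] (pderiv 0 g) = x ^ N * (N * x ^ 2 * eval ![1 / x, y / x ^ 2] f
      - x * eval ![1 / x, y / x ^ 2] (pderiv 0 f)
      - 2 * y * eval ![1 / x, y / x ^ 2] (pderiv 1 f)) := by
  have hrecip : HasDerivAt (fun s : 𝕜 => 1 / s) (-1 / x ^ 2) x := by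
    simpa [one_div, neg_div] using hasDerivAt_inv hx
  have hquot : HasDerivAt (fun s : 𝕜 => y / s ^ 2) (-2 * y / x ^ 3) x := by
    refine ((hasDerivAt_const x y).fun_div (hasDerivAt_pow 2 x)
      (pow_ne_zero 2 hx)).congr_deriv ?_
    field_simp
    norm_num
    ring
  have hpull := (hasDerivAt_pow N x).fun_mul (hasDerivAt_eval_vecCons f hrecip hquot)
  have hg' := hasDerivAt_eval_vecCons g (hasDerivAt_id x) (hasDerivAt_const x y)
  have heq : (fun s => eval ![id s, y] g) =ᶠ[nhds x]
      fun s => s ^ N * eval ![1 / s, y / s ^ 2] f := by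
    filter_upwards [eventually_ne_nhds hx] with s hs using hg s y hs
  have hderiv := hg'.unique (hpull.congr_of_eventuallyEq heq)
  simp only [id, mul_one, mul_zero, add_zero] at hderiv
  rw [hderiv]
  rcases N with _ | N
  · simp only [pow_zero, Nat.cast_zero, zero_mul]
    field_simp
    ring
  · simp only [Nat.add_sub_cancel, Nat.cast_add, Nat.cast_one]
    field_simp
    ring

theorem eval_pderiv_one (hg : IsCremonaPullback N f g) (y : 𝕜) (hx : x ≠ 0) :
    x ^ 2 * eval ![x, y] (pderiv 1 g) = x ^ N * eval ![1 / x, y / x ^ 2] (pderiv 1 f) := by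
  have hpull := (hasDerivAt_eval_vecCons f (hasDerivAt_const y (1 / x))
    ((hasDerivAt_id' y).div_const (x ^ 2))).const_mul (x ^ N)
  have hg' := hasDerivAt_eval_vecCons g (hasDerivAt_const y x) (hasDerivAt_id' y)
  have hderiv := hg'.unique (hpull.congr_of_eventuallyEq (.of_forall fun s => hg x s hx))
  simp only [mul_one, mul_zero, zero_add] at hderiv
  rw [hderiv]
  field_simp

theorem X_zero_mul_invariance {p q k P Q K : MvPolynomial (Fin 2) 𝕜}
    (hg : IsCremonaPullback N f g) (hinv : p * pderiv 0 f + q * pderiv 1 f = k * f)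
    (hP : IsCremonaPullback 3 p P)
    (hQ : ∀ x y : 𝕜, x ≠ 0 → eval ![x, y] Q =
      2 * x ^ 2 * y * eval ![1 / x, y / x ^ 2] p - x ^ 3 * eval ![1 / x, y / x ^ 2] q)
    (hK : IsCremonaPullback 2 k K) :
    X 0 * (P * pderiv 0 g + Q * pderiv 1 g) = (C (N : 𝕜) * P - K) * g := by
  refine MvPolynomial.eq_of_eval_eq_of_ne_zero 0 fun v hv => ?_
  obtain ⟨x, y, rfl⟩ : ∃ x y : 𝕜, v = ![x, y] := ⟨v 0, v 1, by ext i; fin_cases i <;> rfl⟩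
  have hx : x ≠ 0 := hv
  have hinv' := congrArg (eval ![1 / x, y / x ^ 2]) hinv
  simp only [eval_add, eval_mul] at hinv'
  simp only [eval_mul, eval_add, eval_sub, eval_X, eval_C, Matrix.cons_val_zero,
    hP x y hx, hQ x y hx, hK x y hx, hg x y hx]
  linear_combination x * eval ![1 / x, y / x ^ 2] p * hg.eval_pderiv_zero y hx +
    x * (2 * y * eval ![1 / x, y / x ^ 2] p - x * eval ![1 / x, y / x ^ 2] q) *
      hg.eval_pderiv_one y hx - x ^ N * x ^ 2 * hinv'

end IsCremonaPullback

theorem cremona_transform_invariant_curve_general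
    (a10 a01 a20 a11 b10 b01 b20 b11 : ℝ) (n m : ℕ)
    (f k : MvPolynomial (Fin 2) ℝ)
    (hkdeg : k.totalDegree ≤ 1)
    (hinv :
      (C a10 * X 0 + C a01 * X 1 + C a20 * X 0 ^ 2 + C a11 * X 0 * X 1) * pderiv 0 f +
        (C b10 * X 0 + C b01 * X 1 + C b20 * X 0 ^ 2 + C b11 * X 0 * X 1 +
            C (2 * a11) * X 1 ^ 2) * pderiv 1 f = k * f)
    (ftilde : MvPolynomial (Fin 2) ℝ)
    (hstrict : ∀ x y : ℝ, x ≠ 0 →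
      x ^ m * eval ![x, y] ftilde = x ^ (2 * n) * eval ![1 / x, y / x ^ 2] f)
    (hnotdvd : ¬ X 0 ∣ ftilde) :
    ∃ ktilde : MvPolynomial (Fin 2) ℝ, ktilde.totalDegree ≤ 1 ∧
      (C a20 * X 0 + C a11 * X 1 + C a10 * X 0 ^ 2 + C a01 * X 0 * X 1) * pderiv 0 ftilde +
        (C (-b20) * X 0 + C (2 * a20 - b11) * X 1 + C (-b10) * X 0 ^ 2 +
            C (2 * a10 - b01) * X 0 * X 1 + C (2 * a01) * X 1 ^ 2) * pderiv 1 ftilde =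
      ktilde * ftilde := by
  obtain ⟨c₀, c, rfl⟩ := MvPolynomial.totalDegree_le_one_iff.mp hkdeg
  have hg : IsCremonaPullback (2 * n) f (X 0 ^ m * ftilde) := fun x y hx => by
    simpa using hstrict x y hx
  have key := X_zero_mul_invariance_of_X_pow_mul m <| hg.X_zero_mul_invariance hinv
      (isCremonaPullback_quadP a10 a01 a20 a11)
      (fun x y hx => eval_cremonaQ a10 a01 a20 a11 b10 b01 b20 b11 y hx)
      (isCremonaPullback_linear c₀ c)
  set r : ℝ := 2 * n - m
  refine ⟨C (r * a20 - c 0) + ∑ i, ![r * a10 - c₀, r * a01] i • X i,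
    MvPolynomial.totalDegree_le_one_iff.mpr ⟨_, _, rfl⟩,
    eq_mul_of_X_zero_mul_eq (γ := r * a11 - c 1) (key.trans ?_) hnotdvd⟩
  simp only [cremonaP, Fin.sum_univ_two, smul_eq_C_mul, Matrix.cons_val_zero,
    Matrix.cons_val_one, r, map_sub, map_mul, map_natCast, map_ofNat, Nat.cast_mul,
    Nat.cast_ofNat]
  ring

/-- Under the Cremona transformation `(x,y) ↦ (1/x, y/x²)` (type (C2)), an invariant
algebraic curve `f` of the quadratic system with `a₀₀ = b₀₀ = a₀₂ = 0`, `b₀₂ = 2a₁₁`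
transforms to an invariant algebraic curve `f̃` (the strict transform, i.e. the
polynomial satisfying `x^m·f̃(x,y) = x^{2n}·f(1/x, y/x²)` with `f̃` not divisible by `x`)
of the transformed quadratic system `p̃(x,y) = x³p(1/x, y/x²)`,
`q̃(x,y) = 2x²y·p(1/x, y/x²) - x³q(1/x, y/x²)`, with a cofactor of degree at most 1. -/
theorem cremona_transform_invariant_curve
    (a10 a01 a20 a11 b10 b01 b20 b11 : ℝ) (n m : ℕ)
    (f k : MvPolynomial (Fin 2) ℝ)
    (hfdeg : f.totalDegree = n) (hkdeg : k.totalDegree ≤ 1)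
    (hinv :
      (C a10 * X 0 + C a01 * X 1 + C a20 * X 0 ^ 2 + C a11 * X 0 * X 1) * pderiv 0 f +
        (C b10 * X 0 + C b01 * X 1 + C b20 * X 0 ^ 2 + C b11 * X 0 * X 1 +
            C (2 * a11) * X 1 ^ 2) * pderiv 1 f = k * f)
    (ftilde : MvPolynomial (Fin 2) ℝ)
    (hstrict : ∀ x y : ℝ, x ≠ 0 →
      x ^ m * eval ![x, y] ftilde = x ^ (2 * n) * eval ![1 / x, y / x ^ 2] f)
    (hnotdvd : ¬ X 0 ∣ ftilde) :
    ∃ ktilde : MvPolynomial (Fin 2) ℝ, ktilde.totalDegree ≤ 1 ∧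
      (C a20 * X 0 + C a11 * X 1 + C a10 * X 0 ^ 2 + C a01 * X 0 * X 1) * pderiv 0 ftilde +
        (C (-b20) * X 0 + C (2 * a20 - b11) * X 1 + C (-b10) * X 0 ^ 2 +
            C (2 * a10 - b01) * X 0 * X 1 + C (2 * a01) * X 1 ^ 2) * pderiv 1 ftilde =
      ktilde * ftilde :=
  cremona_transform_invariant_curve_general a10 a01 a20 a11 b10 b01 b20 b11 n m f k hkdeg hinv
    ftilde hstrict hnotdvd
end

section
/- Let Ω = A dX + B dY + C dZ with A = -ZQ, B = ZP, C = XQ - YP, where P, Q ∈ ℂ[X,Y,Z] are homogeneous of degree 2, and suppose P(UW, VW, U²) = UW·P̂(U,V,W) and Q(UW, VW, U²) = W·Q̂(U,V,W) for homogeneous polynomials P̂, Q̂. Then the pull-back of Ω under the substitution (X,Y,Z) = (UW, VW, U²) equals U²W · [ W(Q̂ - 2V·P̂) dU + UW·P̂ dV + U(V·P̂ - Q̂) dW ]. -/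
open MvPolynomial

/-- (Lemma 6.1) Pull-back of `Ω = A dX + B dY + C dZ`, with `A = -ZQ`, `B = ZP`,
`C = XQ - YP` for `P, Q` homogeneous of degree 2, under `(X,Y,Z) = (UW, VW, U²)`
(so `dX = W dU + U dW`, `dY = W dV + V dW`, `dZ = 2U dU`). Assuming
`P(UW, VW, U²) = UW·P̂` and `Q(UW, VW, U²) = W·Q̂` with `P̂, Q̂` homogeneous,
the pulled-back 1-form equals `U²W·[W(Q̂ - 2V P̂) dU + UW P̂ dV + U(V P̂ - Q̂) dW]`,
coefficient by coefficient. Here the variables `U, V, W` are `X 0, X 1, X 2`. -/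
theorem cremona_pullback_one_form (P Q Phat Qhat : MvPolynomial (Fin 3) ℂ)
    (hP : P.IsHomogeneous 2) (hQ : Q.IsHomogeneous 2)
    (hPhat : ∃ d, Phat.IsHomogeneous d) (hQhat : ∃ d, Qhat.IsHomogeneous d)
    (hPsub : aeval ![X 0 * X 2, X 1 * X 2, X 0 ^ 2] P = X 0 * X 2 * Phat)
    (hQsub : aeval ![X 0 * X 2, X 1 * X 2, X 0 ^ 2] Q = X 2 * Qhat) :
    aeval ![X 0 * X 2, X 1 * X 2, X 0 ^ 2] (-(X 2 * Q)) * X 2 +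
        aeval ![X 0 * X 2, X 1 * X 2, X 0 ^ 2] (X 0 * Q - X 1 * P) * (2 * X 0) =
      X 0 ^ 2 * X 2 * (X 2 * (Qhat - 2 * X 1 * Phat)) ∧
    aeval ![X 0 * X 2, X 1 * X 2, X 0 ^ 2] (X 2 * P) * X 2 =
      X 0 ^ 2 * X 2 * (X 0 * X 2 * Phat) ∧
    aeval ![X 0 * X 2, X 1 * X 2, X 0 ^ 2] (-(X 2 * Q)) * X 0 +
        aeval ![X 0 * X 2, X 1 * X 2, X 0 ^ 2] (X 2 * P) * X 1 =
      X 0 ^ 2 * X 2 * (X 0 * (X 1 * Phat - Qhat)) := by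
  refine ⟨?_, ?_, ?_⟩ <;>
    simp only [map_neg, map_mul, map_sub, aeval_X, Matrix.cons_val_zero, Matrix.cons_val_one,
      Matrix.head_cons, Matrix.cons_val_two, Matrix.tail_cons, hPsub, hQsub] <;> ring
end

section
/- For all real a, b with ab > 0 and c arbitrary, the circle g(x,y) = ab·(x - (a+b)/(2ab))² + (c+y)² - (a-b)²/(4ab) = 0 is an invariant algebraic curve of the system ẋ = 3(a+b)c x + 4y - 4abc x² - (a+b)xy, ẏ = (1/2)(3(a²+b²) - 2ab - 8abc²)x - 2(a+b)c y - ab(a+b)x² - 4abc xy - 2(a+b)y², with cofactor k(x,y) = -8abc x - 4(a+b)y; that is, p·∂g/∂x + q·∂g/∂y = k·g identically (in fact this polynomial identity holds for all real a, b, c). -/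
/-! Since `ab ≠ 0`, the centre `h = (a+b)/(2ab)` satisfies `ab·h = (a+b)/2` and
`ab·h² - (a-b)²/(4ab) = 1`, so `g = ab x² - (a+b) x + (c+y)² + 1` is an honest polynomial with
`g_x = 2ab x - (a+b)` and `g_y = 2(c+y)`; the invariance identity is then a polynomial identity. -/

lemma deriv_mul_sub_sq_add_sub (A h C D x : ℝ) :
    deriv (fun t : ℝ => A * (t - h) ^ 2 + C - D) x = 2 * A * (x - h) := by
  refine HasDerivAt.deriv ?_
  convert ((((hasDerivAt_id' x).sub_const h).fun_pow 2).const_mul A |>.add_const C).sub_const D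
    using 1
  norm_num
  ring

lemma deriv_add_add_sq_sub (E c D y : ℝ) :
    deriv (fun t : ℝ => E + (c + t) ^ 2 - D) y = 2 * (c + y) := by
  refine HasDerivAt.deriv ?_
  convert ((((hasDerivAt_id' y).const_add c).fun_pow 2).const_add E).sub_const D using 1
  norm_num

section

variable {K : Type*} [Field K] [CharZero K] {a b : K}

lemma mul_mul_sub_div_two_mul (hab : a * b ≠ 0) (x : K) :
    a * b * (x - (a + b) / (2 * (a * b))) = a * b * x - (a + b) / 2 := by
  obtain ⟨ha, hb⟩ := mul_ne_zero_iff.mp hab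
  field_simp

lemma mul_sub_div_sq_sub_div (hab : a * b ≠ 0) (x : K) :
    a * b * (x - (a + b) / (2 * (a * b))) ^ 2 - (a - b) ^ 2 / (4 * (a * b)) =
      a * b * x ^ 2 - (a + b) * x + 1 := by
  obtain ⟨ha, hb⟩ := mul_ne_zero_iff.mp hab
  field_simp
  ring

end

/-- The circle `g(x,y) = ab(x - (a+b)/(2ab))² + (c+y)² - (a-b)²/(4ab) = 0` is an invariant
algebraic curve, with cofactor `k(x,y) = -8abcx - 4(a+b)y`, of the quadratic system obtained
from Yablonskii's system by the Cremona transformation (C2). -/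
theorem yablonskii_image_circle_invariant (a b c : ℝ) (hab : a * b > 0) :
    ∀ x y : ℝ,
      (3 * (a + b) * c * x + 4 * y - 4 * a * b * c * x ^ 2 - (a + b) * x * y) *
          deriv (fun t : ℝ =>
            a * b * (t - (a + b) / (2 * (a * b))) ^ 2 + (c + y) ^ 2 -
              (a - b) ^ 2 / (4 * (a * b))) x +
        ((1 / 2) * (3 * (a ^ 2 + b ^ 2) - 2 * a * b - 8 * a * b * c ^ 2) * x -
            2 * (a + b) * c * y - a * b * (a + b) * x ^ 2 - 4 * a * b * c * x * y -
            2 * (a + b) * y ^ 2) *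
          deriv (fun t : ℝ =>
            a * b * (x - (a + b) / (2 * (a * b))) ^ 2 + (c + t) ^ 2 -
              (a - b) ^ 2 / (4 * (a * b))) y =
      (-8 * a * b * c * x - 4 * (a + b) * y) *
        (a * b * (x - (a + b) / (2 * (a * b))) ^ 2 + (c + y) ^ 2 -
          (a - b) ^ 2 / (4 * (a * b))) := by
  intro x y
  have hab' : a * b ≠ 0 := hab.ne'
  have hg : a * b * (x - (a + b) / (2 * (a * b))) ^ 2 + (c + y) ^ 2 - (a - b) ^ 2 / (4 * (a * b)) =
      a * b * x ^ 2 - (a + b) * x + 1 + (c + y) ^ 2 := by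
    rw [← mul_sub_div_sq_sub_div hab' x]
    ring
  rw [deriv_mul_sub_sq_add_sub, deriv_add_add_sq_sub, mul_assoc 2, mul_mul_sub_div_two_mul hab', hg]
  ring
end
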